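/- Let 𝔽_4 = {0, 1, ω, ω+1} where ω² = ω + 1, and let G_1 = [[1, ω, 0, ω+1], [0, 0, 1, ω]] ∈ 𝔽_4^{2×4}. Let M_1 = M_{G_1} be the q-matroid on 𝔽_2^4 represented by G_1. Then the direct sum M_1 ⊕ M_1 is not representable over any field extension 𝔽_{2^m} of 𝔽_2: for every m ≥ 1 there is no matrix H over 𝔽_{2^m} with M_H = M_1 ⊕ M_1. -/

import Mathlib

open Module Matrix

/-- The row space (over `Fq`) of a matrix with rows indexed by `Fin y`. -/
def rowSpace {Fq : Type*} [Field Fq] {y : ℕ} {ι : Type*} (Y : Matrix (Fin y) ι Fq) :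
    Submodule Fq (ι → Fq) :=
  Submodule.span Fq (Set.range fun i => Y i)

/-- The rank function (as an integer) of the direct sum `M₁ ⊕ M₂` of q-matroids
`M₁ = (𝔽_q^{n₁}, ρ₁)` and `M₂ = (𝔽_q^{n₂}, ρ₂)` on `𝔽_q^{n₁+n₂} = (Fin n₁ ⊕ Fin n₂) → 𝔽_q`. -/
noncomputable def dsRank {Fq : Type*} [Field Fq] {n₁ n₂ : ℕ}
    (ρ₁ : Submodule Fq (Fin n₁ → Fq) → ℕ) (ρ₂ : Submodule Fq (Fin n₂ → Fq) → ℕ)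
    (V : Submodule Fq ((Fin n₁ ⊕ Fin n₂) → Fq)) : ℤ :=
  (finrank Fq V : ℤ) +
    sInf {z : ℤ | ∃ X : Submodule Fq ((Fin n₁ ⊕ Fin n₂) → Fq), X ≤ V ∧
      z = (ρ₁ (X.map (LinearMap.funLeft Fq Fq Sum.inl)) : ℤ) +
            (ρ₂ (X.map (LinearMap.funLeft Fq Fq Sum.inr)) : ℤ) - (finrank Fq X : ℤ)}

namespace Stmt14Aux

open Submodule

/-! ### general field helpers -/

lemma rangeFin2 {β : Type*} (f : Fin 2 → β) : Set.range f = {f 0, f 1} := by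
  ext x
  constructor
  · rintro ⟨i, rfl⟩; fin_cases i <;> simp
  · rintro (rfl | rfl)
    exacts [⟨0, rfl⟩, ⟨1, rfl⟩]

section FieldHelpers
variable {K : Type*} [Field K] {V : Type*} [AddCommGroup V] [Module K V]

lemma finrank_span_singleton_le' (u : V) : finrank K (span K ({u} : Set V)) ≤ 1 := by
  by_cases hu : u = 0
  · rw [hu, span_zero_singleton]; simp
  · rw [finrank_span_singleton hu]

lemma finrank_span_pair_smul_le [FiniteDimensional K V] (u : V) (c : K) :
    finrank K (span K {u, c • u}) ≤ 1 := by
  have h1 : span K {u, c • u} ≤ span K {u} := by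
    apply span_le.2
    intro x hx
    simp only [Set.mem_insert_iff, Set.mem_singleton_iff] at hx
    rcases hx with rfl | rfl
    · exact mem_span_singleton_self _
    · exact smul_mem _ _ (mem_span_singleton_self _)
  exact le_trans (Submodule.finrank_mono h1) (finrank_span_singleton_le' u)

lemma exists_smul_of_span_pair [FiniteDimensional K V] {x y : V} (hx : x ≠ 0)
    (h : finrank K (span K {x, y}) = 1) : ∃ c : K, y = c • x := by
  have h1 : span K ({x} : Set V) ≤ span K {x, y} := span_mono (by simp)
  have h2 : span K ({x} : Set V) = span K {x, y} :=
    Submodule.eq_of_le_of_finrank_le h1 (by rw [h, finrank_span_singleton hx])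
  have hy : y ∈ span K ({x} : Set V) := by
    rw [h2]; exact subset_span (by simp)
  obtain ⟨c, hc⟩ := mem_span_singleton.1 hy
  exact ⟨c, hc.symm⟩

lemma indep_of_span_pair [FiniteDimensional K V] {x y : V}
    (h : finrank K (span K {x, y}) = 2) : ∀ c d : K, c • x + d • y = 0 → c = 0 ∧ d = 0 := by
  have key : ∀ u v : V, ∀ a b : K, a ≠ 0 → a • u + b • v = 0 →
      finrank K (span K {u, v}) ≤ 1 := by
    intro u v a b ha hab
    have hu : u ∈ span K ({v} : Set V) := by
      have h1 : a • u = -(b • v) := eq_neg_of_add_eq_zero_left hab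
      have h2 : u = a⁻¹ • (-(b • v)) := by
        rw [← h1, smul_smul, inv_mul_cancel₀ ha, one_smul]
      rw [h2]
      exact smul_mem _ _ (neg_mem (smul_mem _ _ (mem_span_singleton_self v)))
    have h1 : span K {u, v} ≤ span K {v} := by
      apply span_le.2
      intro x hx
      simp only [Set.mem_insert_iff, Set.mem_singleton_iff] at hx
      rcases hx with rfl | rfl
      · exact hu
      · exact mem_span_singleton_self _
    exact le_trans (Submodule.finrank_mono h1) (finrank_span_singleton_le' v)
  intro c d hcd
  constructor
  · by_contra hc
    have := key x y c d hc hcd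
    omega
  · by_contra hd
    have h' : d • y + c • x = 0 := by rw [add_comm]; exact hcd
    have := key y x d c hd h'
    rw [show ({y, x} : Set V) = {x, y} from Set.pair_comm y x] at this
    omega
end FieldHelpers

/-! ### ZMod 2 helpers -/

lemma z2_cases (c : ZMod 2) : c = 0 ∨ c = 1 := by revert c; decide

section Zmod2Helpers
variable {M : Type*} [AddCommGroup M] [Module (ZMod 2) M]

lemma z2_add_self (x : M) : x + x = 0 := by
  have h : ((1 : ZMod 2) + 1) • x = x + x := by rw [add_smul, one_smul]
  have h2 : ((1 : ZMod 2) + 1) = 0 := by decide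
  rw [h2, zero_smul] at h
  exact h.symm

lemma z2_add_ne {a b : M} (hab : a ≠ b) : a + b ≠ 0 := by
  intro h
  apply hab
  have := congrArg (a + ·) h.symm
  simpa [← add_assoc, z2_add_self] using this

lemma z2_mem_pair {a b x : M} (h : x ∈ span (ZMod 2) {a, b}) :
    x = 0 ∨ x = a ∨ x = b ∨ x = a + b := by
  obtain ⟨c, d, rfl⟩ := mem_span_pair.1 h
  rcases z2_cases c with rfl | rfl <;> rcases z2_cases d with rfl | rfl <;>
      simp [one_smul, zero_smul]

lemma z2_subEnum {a b : M} {X : Submodule (ZMod 2) M} (h : X ≤ span (ZMod 2) {a, b}) :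
    X = ⊥ ∨ X = span (ZMod 2) {a} ∨ X = span (ZMod 2) {b} ∨
      X = span (ZMod 2) {a + b} ∨ X = span (ZMod 2) {a, b} := by
  by_cases ha : a ∈ X <;> by_cases hb : b ∈ X
  · right; right; right; right
    refine le_antisymm h (span_le.2 ?_)
    intro x hx
    simp only [Set.mem_insert_iff, Set.mem_singleton_iff] at hx
    rcases hx with rfl | rfl
    exacts [ha, hb]
  · right; left
    refine le_antisymm ?_ ((span_singleton_le_iff_mem a X).2 ha)
    intro x hx
    rcases z2_mem_pair (h hx) with rfl | rfl | rfl | rfl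
    · exact zero_mem _
    · exact mem_span_singleton_self _
    · exact absurd hx hb
    · exfalso
      apply hb
      have : a + (a + b) ∈ X := X.add_mem ha hx
      rwa [← add_assoc, z2_add_self, zero_add] at this
  · right; right; left
    refine le_antisymm ?_ ((span_singleton_le_iff_mem b X).2 hb)
    intro x hx
    rcases z2_mem_pair (h hx) with rfl | rfl | rfl | rfl
    · exact zero_mem _
    · exact absurd hx ha
    · exact mem_span_singleton_self _
    · exfalso
      apply ha
      have : (a + b) + b ∈ X := X.add_mem hx hb
      rwa [add_assoc, z2_add_self, add_zero] at this
  · by_cases hc : a + b ∈ X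
    · right; right; right; left
      refine le_antisymm ?_ ((span_singleton_le_iff_mem _ X).2 hc)
      intro x hx
      rcases z2_mem_pair (h hx) with rfl | rfl | rfl | rfl
      · exact zero_mem _
      · exact absurd hx ha
      · exact absurd hx hb
      · exact mem_span_singleton_self _
    · left
      rw [eq_bot_iff]
      intro x hx
      rcases z2_mem_pair (h hx) with rfl | rfl | rfl | rfl
      · exact zero_mem _
      · exact absurd hx ha
      · exact absurd hx hb
      · exact absurd hx hc

lemma z2_indep2 {a b : M} (ha : a ≠ 0) (hb : b ≠ 0) (hab : a ≠ b) :
    LinearIndependent (ZMod 2) ![a, b] := by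
  rw [linearIndependent_fin2]
  refine ⟨by simpa using hb, ?_⟩
  intro c
  rcases z2_cases c with rfl | rfl
  · simpa using fun h => ha h.symm
  · simpa using fun h => hab h.symm

lemma z2_finrank_pair {a b : M} (ha : a ≠ 0) (hb : b ≠ 0) (hab : a ≠ b) :
    finrank (ZMod 2) (span (ZMod 2) {a, b}) = 2 := by
  have h1 : ({a, b} : Set M) = Set.range ![a, b] := by
    rw [rangeFin2]; simp
  rw [h1, finrank_span_eq_card (z2_indep2 ha hb hab)]
  simp
end Zmod2Helpers

/-! ### rank helpers -/

lemma rank_ge_one_of_col {K : Type*} [Field K] {s t : ℕ} (P : Matrix (Fin s) (Fin t) K)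
    (j : Fin t) (h : Pᵀ j ≠ 0) : 1 ≤ P.rank := by
  rw [Matrix.rank_eq_finrank_span_cols]
  have h1 : span K ({Pᵀ j} : Set (Fin s → K)) ≤ span K (Set.range Pᵀ) :=
    span_mono (Set.singleton_subset_iff.2 (Set.mem_range_self j))
  calc 1 = finrank K (span K ({Pᵀ j} : Set (Fin s → K))) := (finrank_span_singleton h).symm
    _ ≤ finrank K (span K (Set.range Pᵀ)) := Submodule.finrank_mono h1

lemma rank_pair_eq_one {K : Type*} [Field K] (p q c : K) (h : ¬(p = 0 ∧ q = 0)) :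
    (!![p, c * p; q, c * q]).rank = 1 := by
  have hcol0 : (!![p, c * p; q, c * q])ᵀ 0 = ![p, q] := by
    funext i; fin_cases i <;> simp
  have hcol1 : (!![p, c * p; q, c * q])ᵀ 1 = c • ![p, q] := by
    funext i; fin_cases i <;> simp
  have hne : ![p, q] ≠ 0 := by
    intro h0
    exact h ⟨congr_fun h0 0, congr_fun h0 1⟩
  apply le_antisymm
  · rw [Matrix.rank_eq_finrank_span_cols, rangeFin2]
    change finrank K (span K {(!![p, c * p; q, c * q])ᵀ 0, (!![p, c * p; q, c * q])ᵀ 1}) ≤ 1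
    rw [hcol0, hcol1]
    exact finrank_span_pair_smul_le _ _
  · apply rank_ge_one_of_col _ 0
    rw [hcol0]; exact hne

/-! ### rowSpace of small explicit matrices -/

lemma rowSpace_zero {Fq : Type*} [Field Fq] {ι : Type*} (Y : Matrix (Fin 0) ι Fq) :
    rowSpace Y = ⊥ := by
  unfold rowSpace
  rw [Set.range_eq_empty, span_empty]

lemma rowSpace_one {Fq : Type*} [Field Fq] {ι : Type*} (v : ι → Fq) :
    rowSpace (Matrix.of ![v]) = span Fq {v} := by
  unfold rowSpace
  congr 1
  rw [Set.range_unique]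
  rfl

lemma rowSpace_two {Fq : Type*} [Field Fq] {ι : Type*} (v w : ι → Fq) :
    rowSpace (Matrix.of ![v, w]) = span Fq {v, w} := by
  unfold rowSpace
  congr 1
  rw [show (fun i => Matrix.of ![v, w] i) = ![v, w] from rfl, rangeFin2]
  rfl

/-! ### Sum.elim helpers -/

section SumElim
variable {n₁ n₂ : ℕ}

lemma elim_add (v v' : Fin n₁ → ZMod 2) (w w' : Fin n₂ → ZMod 2) :
    (Sum.elim v w + Sum.elim v' w' : Fin n₁ ⊕ Fin n₂ → ZMod 2) = Sum.elim (v + v') (w + w') := by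
  funext i; cases i <;> rfl

lemma elim_ne (v v' : Fin n₁ → ZMod 2) (w w' : Fin n₂ → ZMod 2) (h : v ≠ v') :
    (Sum.elim v w : Fin n₁ ⊕ Fin n₂ → ZMod 2) ≠ Sum.elim v' w' := by
  intro he
  exact h (funext fun i => congr_fun he (Sum.inl i))

lemma elim_ne' (v v' : Fin n₁ → ZMod 2) (w w' : Fin n₂ → ZMod 2) (h : w ≠ w') :
    (Sum.elim v w : Fin n₁ ⊕ Fin n₂ → ZMod 2) ≠ Sum.elim v' w' := by
  intro he
  exact h (funext fun i => congr_fun he (Sum.inr i))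

lemma elim_ne_zero₁ {v : Fin n₁ → ZMod 2} (w : Fin n₂ → ZMod 2) (hv : v ≠ 0) :
    (Sum.elim v w : Fin n₁ ⊕ Fin n₂ → ZMod 2) ≠ 0 := by
  intro he
  exact hv (funext fun i => congr_fun he (Sum.inl i))

lemma elim_ne_zero₂ (v : Fin n₁ → ZMod 2) {w : Fin n₂ → ZMod 2} (hw : w ≠ 0) :
    (Sum.elim v w : Fin n₁ ⊕ Fin n₂ → ZMod 2) ≠ 0 := by
  intro he
  exact hw (funext fun i => congr_fun he (Sum.inr i))

lemma funLeft_elim_inl (v : Fin n₁ → ZMod 2) (w : Fin n₂ → ZMod 2) :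
    (LinearMap.funLeft (ZMod 2) (ZMod 2) Sum.inl) (Sum.elim v w) = v := rfl

lemma funLeft_elim_inr (v : Fin n₁ → ZMod 2) (w : Fin n₂ → ZMod 2) :
    (LinearMap.funLeft (ZMod 2) (ZMod 2) Sum.inr) (Sum.elim v w) = w := rfl

lemma map_span_single_inl (v : Fin n₁ → ZMod 2) (w : Fin n₂ → ZMod 2) :
    (span (ZMod 2) {(Sum.elim v w : Fin n₁ ⊕ Fin n₂ → ZMod 2)}).map
      (LinearMap.funLeft (ZMod 2) (ZMod 2) Sum.inl) = span (ZMod 2) {v} := by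
  rw [Submodule.map_span, Set.image_singleton, funLeft_elim_inl]

lemma map_span_single_inr (v : Fin n₁ → ZMod 2) (w : Fin n₂ → ZMod 2) :
    (span (ZMod 2) {(Sum.elim v w : Fin n₁ ⊕ Fin n₂ → ZMod 2)}).map
      (LinearMap.funLeft (ZMod 2) (ZMod 2) Sum.inr) = span (ZMod 2) {w} := by
  rw [Submodule.map_span, Set.image_singleton, funLeft_elim_inr]

lemma map_span_pair_inl (v v' : Fin n₁ → ZMod 2) (w w' : Fin n₂ → ZMod 2) :
    (span (ZMod 2) {(Sum.elim v w : Fin n₁ ⊕ Fin n₂ → ZMod 2), Sum.elim v' w'}).map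
      (LinearMap.funLeft (ZMod 2) (ZMod 2) Sum.inl) = span (ZMod 2) {v, v'} := by
  rw [Submodule.map_span, Set.image_pair, funLeft_elim_inl, funLeft_elim_inl]

lemma map_span_pair_inr (v v' : Fin n₁ → ZMod 2) (w w' : Fin n₂ → ZMod 2) :
    (span (ZMod 2) {(Sum.elim v w : Fin n₁ ⊕ Fin n₂ → ZMod 2), Sum.elim v' w'}).map
      (LinearMap.funLeft (ZMod 2) (ZMod 2) Sum.inr) = span (ZMod 2) {w, w'} := by
  rw [Submodule.map_span, Set.image_pair, funLeft_elim_inr, funLeft_elim_inr]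

end SumElim

/-! ### the master dsRank evaluation on 2-dimensional spaces -/

section DsPair
variable {n₁ n₂ : ℕ} (ρ₁ : Submodule (ZMod 2) (Fin n₁ → ZMod 2) → ℕ)
  (ρ₂ : Submodule (ZMod 2) (Fin n₂ → ZMod 2) → ℕ)

lemma dsPair (a b : (Fin n₁ ⊕ Fin n₂) → ZMod 2) (ha : a ≠ 0) (hb : b ≠ 0) (hab : a ≠ b)
    (m : ℤ) (h0 : m ≤ 0)
    (hA : m ≤ (ρ₁ ((span (ZMod 2) {a}).map (LinearMap.funLeft (ZMod 2) (ZMod 2) Sum.inl)) : ℤ) +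
      (ρ₂ ((span (ZMod 2) {a}).map (LinearMap.funLeft (ZMod 2) (ZMod 2) Sum.inr)) : ℤ) - 1)
    (hB : m ≤ (ρ₁ ((span (ZMod 2) {b}).map (LinearMap.funLeft (ZMod 2) (ZMod 2) Sum.inl)) : ℤ) +
      (ρ₂ ((span (ZMod 2) {b}).map (LinearMap.funLeft (ZMod 2) (ZMod 2) Sum.inr)) : ℤ) - 1)
    (hC : m ≤ (ρ₁ ((span (ZMod 2) {a + b}).map (LinearMap.funLeft (ZMod 2) (ZMod 2) Sum.inl)) : ℤ) +
      (ρ₂ ((span (ZMod 2) {a + b}).map (LinearMap.funLeft (ZMod 2) (ZMod 2) Sum.inr)) : ℤ) - 1)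
    (hV : m ≤ (ρ₁ ((span (ZMod 2) {a, b}).map (LinearMap.funLeft (ZMod 2) (ZMod 2) Sum.inl)) : ℤ) +
      (ρ₂ ((span (ZMod 2) {a, b}).map (LinearMap.funLeft (ZMod 2) (ZMod 2) Sum.inr)) : ℤ) - 2)
    (hW : ∃ X : Submodule (ZMod 2) ((Fin n₁ ⊕ Fin n₂) → ZMod 2), X ≤ span (ZMod 2) {a, b} ∧
      m = (ρ₁ (X.map (LinearMap.funLeft (ZMod 2) (ZMod 2) Sum.inl)) : ℤ) +
            (ρ₂ (X.map (LinearMap.funLeft (ZMod 2) (ZMod 2) Sum.inr)) : ℤ) - (finrank (ZMod 2) X : ℤ)) :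
    dsRank ρ₁ ρ₂ (span (ZMod 2) {a, b}) = 2 + m := by
  have hc : a + b ≠ 0 := z2_add_ne hab
  have hlb : ∀ z ∈ {z : ℤ | ∃ X : Submodule (ZMod 2) ((Fin n₁ ⊕ Fin n₂) → ZMod 2),
      X ≤ span (ZMod 2) {a, b} ∧
      z = (ρ₁ (X.map (LinearMap.funLeft (ZMod 2) (ZMod 2) Sum.inl)) : ℤ) +
            (ρ₂ (X.map (LinearMap.funLeft (ZMod 2) (ZMod 2) Sum.inr)) : ℤ) - (finrank (ZMod 2) X : ℤ)},
      m ≤ z := by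
    rintro z ⟨X, hXle, rfl⟩
    rcases z2_subEnum hXle with rfl | rfl | rfl | rfl | rfl
    · simp only [Submodule.map_bot, finrank_bot, Nat.cast_zero, sub_zero]
      exact le_trans h0 (by positivity)
    · rw [finrank_span_singleton ha]; exact_mod_cast hA
    · rw [finrank_span_singleton hb]; exact_mod_cast hB
    · rw [finrank_span_singleton hc]; exact_mod_cast hC
    · rw [z2_finrank_pair ha hb hab]; exact_mod_cast hV
  have hmem : m ∈ {z : ℤ | ∃ X : Submodule (ZMod 2) ((Fin n₁ ⊕ Fin n₂) → ZMod 2),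
      X ≤ span (ZMod 2) {a, b} ∧
      z = (ρ₁ (X.map (LinearMap.funLeft (ZMod 2) (ZMod 2) Sum.inl)) : ℤ) +
            (ρ₂ (X.map (LinearMap.funLeft (ZMod 2) (ZMod 2) Sum.inr)) : ℤ) - (finrank (ZMod 2) X : ℤ)} := hW
  have hsinf : sInf {z : ℤ | ∃ X : Submodule (ZMod 2) ((Fin n₁ ⊕ Fin n₂) → ZMod 2),
      X ≤ span (ZMod 2) {a, b} ∧
      z = (ρ₁ (X.map (LinearMap.funLeft (ZMod 2) (ZMod 2) Sum.inl)) : ℤ) +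
            (ρ₂ (X.map (LinearMap.funLeft (ZMod 2) (ZMod 2) Sum.inr)) : ℤ) - (finrank (ZMod 2) X : ℤ)} = m :=
    le_antisymm (csInf_le ⟨m, hlb⟩ hmem) (le_csInf ⟨m, hmem⟩ hlb)
  unfold dsRank
  rw [hsinf, z2_finrank_pair ha hb hab]
  norm_num
end DsPair


/-! ### the final algebraic contradiction -/

section FinalAlg
variable {K : Type*} [Field K] {W : Type*} [AddCommGroup W] [Module K W] [FiniteDimensional K W]

/-- The copy-wise algebraic consequence: the ratio `α` satisfies `α² = 1 + α`. -/
lemma copy_alg (A1 A2 A3 Af : W)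
    (ET : finrank K (span K {A1, A3}) = 2)
    (ES1 : finrank K (span K {A1, A2}) = 1)
    (ES2 : finrank K (span K {A3, Af}) = 1)
    (ES3 : finrank K (span K {A1 + A3, A2 + Af}) = 1)
    (ES4 : finrank K (span K {A1 + Af, A2 + A3 + Af}) = 1) :
    ∃ α : K, A2 = α • A1 ∧ α * α = 1 + α := by
  have indA := indep_of_span_pair ET
  have hA1 : A1 ≠ 0 := by
    intro h
    exact one_ne_zero ((indA 1 0 (by rw [h]; simp)).1)
  have hA3 : A3 ≠ 0 := by
    intro h
    exact one_ne_zero ((indA 0 1 (by rw [h]; simp)).2)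
  obtain ⟨α, hα⟩ := exists_smul_of_span_pair hA1 ES1
  obtain ⟨β, hβ⟩ := exists_smul_of_span_pair hA3 ES2
  have hA13 : A1 + A3 ≠ 0 := by
    intro h
    exact one_ne_zero ((indA 1 1 (by linear_combination (norm := module) h)).1)
  obtain ⟨c, hc⟩ := exists_smul_of_span_pair hA13 ES3
  obtain ⟨hc1, hc2⟩ := indA (α - c) (β - c) (by linear_combination (norm := module) hc - hα - hβ)
  have hβα : β = α := by
    rw [sub_eq_zero] at hc1 hc2
    rw [hc1, hc2]
  have hA1f : A1 + Af ≠ 0 := by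
    rw [hβ]
    intro h
    exact one_ne_zero ((indA 1 β (by linear_combination (norm := module) h)).1)
  obtain ⟨d, hd⟩ := exists_smul_of_span_pair hA1f ES4
  obtain ⟨hd1, hd2⟩ := indA (α - d) (1 + β - d * β)
    (by linear_combination (norm := module) hd - hα + (d - 1) • hβ)
  refine ⟨α, hα, ?_⟩
  rw [sub_eq_zero] at hd1
  rw [hβα, ← hd1] at hd2
  linear_combination -hd2

/-- Final contradiction from the two representability data sets. -/
lemma final_contradiction (h2K : (1 : K) + 1 = 0) (A1 A2 A3 Af B1 B2 B3 Bf : W)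
    (ET : finrank K (span K {A1, A3}) = 2)
    (ES1 : finrank K (span K {A1, A2}) = 1)
    (ES2 : finrank K (span K {A3, Af}) = 1)
    (ES3 : finrank K (span K {A1 + A3, A2 + Af}) = 1)
    (ES4 : finrank K (span K {A1 + Af, A2 + A3 + Af}) = 1)
    (FT : finrank K (span K {B1, B3}) = 2)
    (FS1 : finrank K (span K {B1, B2}) = 1)
    (FS2 : finrank K (span K {B3, Bf}) = 1)
    (FS3 : finrank K (span K {B1 + B3, B2 + Bf}) = 1)
    (FS4 : finrank K (span K {B1 + Bf, B2 + B3 + Bf}) = 1)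
    (EM1 : finrank K (span K {A1 + B1, A2 + B2}) = 2)
    (EM2 : finrank K (span K {A1 + B1, A2 + (B1 + B2)}) = 2) : False := by
  obtain ⟨α, hα, hαα⟩ := copy_alg A1 A2 A3 Af ET ES1 ES2 ES3 ES4
  obtain ⟨α', hα', hα'α'⟩ := copy_alg B1 B2 B3 Bf FT FS1 FS2 FS3 FS4
  have hsplit : (α + α') * (α + α' + 1) = 0 := by
    linear_combination hαα + hα'α' + (1 + α + α' + α * α') * h2K
  rcases mul_eq_zero.1 hsplit with hcase | hcase
  · have hαα' : α' = α := by linear_combination hcase - α * h2K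
    have hx : A2 + B2 = α • (A1 + B1) := by
      rw [hα, hα', hαα', smul_add]
    rw [hx] at EM1
    have := finrank_span_pair_smul_le (A1 + B1) α
    omega
  · have hcoef : (1 : K) + α' = α := by linear_combination hcase - α * h2K
    have hx : A2 + (B1 + B2) = α • (A1 + B1) := by
      rw [hα, hα']
      have hB : B1 + α' • B1 = α • B1 := by
        calc B1 + α' • B1 = (1 + α') • B1 := by rw [add_smul, one_smul]
          _ = α • B1 := by rw [hcoef]
      rw [hB, ← smul_add]
    rw [hx] at EM2
    have := finrank_span_pair_smul_le (A1 + B1) α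
    omega
end FinalAlg

end Stmt14Aux


open Stmt14Aux Submodule

/-- Let `ω ∈ 𝔽₄ = GF(2²)` satisfy `ω² = ω + 1` and let
`G₁ = [[1, ω, 0, ω+1], [0, 0, 1, ω]]`, with `M₁ = M_{G₁}` the q-matroid it represents
on `𝔽₂⁴`. Then `M₁ ⊕ M₁` is not representable over any field extension `𝔽_{2^m}` of `𝔽₂`:
for every `m ≥ 1` there is no matrix `H` over `𝔽_{2^m}` with `M_H = M₁ ⊕ M₁`. -/
theorem stmt14 (ω : GaloisField 2 2) (hω : ω ^ 2 = ω + 1)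
    (ρ₁ : Submodule (ZMod 2) (Fin 4 → ZMod 2) → ℕ)
    (hρ₁ : ∀ (y : ℕ) (Y : Matrix (Fin y) (Fin 4) (ZMod 2)),
      ρ₁ (rowSpace Y) =
        (!![1, ω, 0, ω + 1; 0, 0, 1, ω] *
          (Y.map (algebraMap (ZMod 2) (GaloisField 2 2)))ᵀ).rank) :
    ∀ m : ℕ, 1 ≤ m →
      ∀ (r : ℕ) (H : Matrix (Fin r) (Fin 4 ⊕ Fin 4) (GaloisField 2 m)),
        ¬ ∀ (y : ℕ) (Y : Matrix (Fin y) (Fin 4 ⊕ Fin 4) (ZMod 2)),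
            ((H * (Y.map (algebraMap (ZMod 2) (GaloisField 2 m)))ᵀ).rank : ℤ) =
              dsRank ρ₁ ρ₁ (rowSpace Y) := by
  intro m hm r H hH
  classical
  -- basic 𝔽₄ facts
  have h2 : (1 : GaloisField 2 2) + 1 = 0 := by
    have h := CharP.cast_eq_zero (GaloisField 2 2) 2
    norm_num at h
    linear_combination h
  have hω0 : ω ≠ 0 := by
    intro h; rw [h] at hω; simpa using hω
  have hω1 : ω ≠ 1 := by
    intro h; rw [h, one_pow, h2] at hω; exact one_ne_zero hω
  have key : ∀ x y : ZMod 2, (algebraMap (ZMod 2) (GaloisField 2 2)) x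
      + ω * (algebraMap (ZMod 2) (GaloisField 2 2)) y = 0 → x = 0 ∧ y = 0 := by
    intro x y h
    rcases z2_cases x with rfl | rfl <;> rcases z2_cases y with rfl | rfl <;>
        simp only [_root_.map_zero, _root_.map_one, mul_zero, mul_one, add_zero, zero_add] at h ⊢
    · trivial
    · exact absurd h hω0
    · exact absurd h one_ne_zero
    · exfalso; apply hω1; linear_combination h - h2
  -- values of ρ₁
  have R0 : ρ₁ ⊥ = 0 := by
    have h := hρ₁ 0 (Matrix.of ![])
    rw [rowSpace_zero] at h
    have h' := Matrix.rank_le_card_width (!![1, ω, 0, ω + 1; 0, 0, 1, ω] *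
      (((Matrix.of (![] : Fin 0 → Fin 4 → ZMod 2))).map (algebraMap (ZMod 2) (GaloisField 2 2)))ᵀ)
    simp only [Fintype.card_fin] at h'
    omega
  have R1 : ∀ v : Fin 4 → ZMod 2, v ≠ 0 → ρ₁ (span (ZMod 2) {v}) = 1 := by
    intro v hv
    have h := hρ₁ 1 (Matrix.of ![v])
    rw [rowSpace_one] at h
    rw [h]
    have hle := Matrix.rank_le_card_width (!![1, ω, 0, ω + 1; 0, 0, 1, ω] *
      ((Matrix.of ![v]).map (algebraMap (ZMod 2) (GaloisField 2 2)))ᵀ)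
    simp only [Fintype.card_fin] at hle
    have hge : 1 ≤ (!![1, ω, 0, ω + 1; 0, 0, 1, ω] *
        ((Matrix.of ![v]).map (algebraMap (ZMod 2) (GaloisField 2 2)))ᵀ).rank := by
      apply rank_ge_one_of_col _ 0
      intro hcol
      have h1 := congr_fun hcol 1
      have h0 := congr_fun hcol 0
      simp only [Matrix.transpose_apply, Matrix.mul_apply, Fin.sum_univ_four, Matrix.map_apply,
        Matrix.of_apply, Matrix.cons_val', Matrix.cons_val_zero, Matrix.cons_val_one,
        Matrix.head_cons, Matrix.head_fin_const, Matrix.empty_val', Matrix.cons_val_fin_one,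
        Pi.zero_apply, one_mul, zero_mul, add_zero, zero_add,
        Matrix.cons_val_two, Matrix.cons_val_three, Matrix.tail_cons] at h1 h0
      obtain ⟨h23, h24⟩ := key _ _ h1
      rw [h24] at h0
      simp only [_root_.map_zero, mul_zero, add_zero] at h0
      obtain ⟨h21, h22⟩ := key _ _ h0
      apply hv
      funext i
      fin_cases i
      exacts [h21, h22, h23, h24]
    omega
  -- the special 2-dimensional subspaces have ρ₁ = 1
  have RS1 : ρ₁ (span (ZMod 2) {![1,0,0,0], ![0,1,0,0]}) = 1 := by
    have h := hρ₁ 2 (Matrix.of ![![1,0,0,0], ![0,1,0,0]])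
    rw [rowSpace_two] at h
    rw [h]
    have hP : (!![1, ω, 0, ω + 1; 0, 0, 1, ω] : Matrix (Fin 2) (Fin 4) (GaloisField 2 2)) *
        ((Matrix.of ![![1,0,0,0], ![0,1,0,0]]).map (algebraMap (ZMod 2) (GaloisField 2 2)))ᵀ
        = !![1, ω * 1; 0, ω * 0] := by
      ext i j
      fin_cases i <;> fin_cases j
      · simp [Matrix.mul_apply, Fin.sum_univ_four, Matrix.map_apply]
      · simp [Matrix.mul_apply, Fin.sum_univ_four, Matrix.map_apply]
      · simp [Matrix.mul_apply, Fin.sum_univ_four, Matrix.map_apply]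
      · simp [Matrix.mul_apply, Fin.sum_univ_four, Matrix.map_apply]
    rw [hP]
    exact rank_pair_eq_one 1 0 ω (by simp)
  have RS2 : ρ₁ (span (ZMod 2) {![0,0,1,0], ![1,1,0,1]}) = 1 := by
    have h := hρ₁ 2 (Matrix.of ![![0,0,1,0], ![1,1,0,1]])
    rw [rowSpace_two] at h
    rw [h]
    have hP : (!![1, ω, 0, ω + 1; 0, 0, 1, ω] : Matrix (Fin 2) (Fin 4) (GaloisField 2 2)) *
        ((Matrix.of ![![0,0,1,0], ![1,1,0,1]]).map (algebraMap (ZMod 2) (GaloisField 2 2)))ᵀ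
        = !![0, ω * 0; 1, ω * 1] := by
      ext i j
      fin_cases i <;> fin_cases j
      · simp [Matrix.mul_apply, Fin.sum_univ_four, Matrix.map_apply]
      · simp [Matrix.mul_apply, Fin.sum_univ_four, Matrix.map_apply]
        linear_combination (ω + 1) * h2
      · simp [Matrix.mul_apply, Fin.sum_univ_four, Matrix.map_apply]
      · simp [Matrix.mul_apply, Fin.sum_univ_four, Matrix.map_apply]
    rw [hP]
    exact rank_pair_eq_one 0 1 ω (by simp)
  have RS3 : ρ₁ (span (ZMod 2) {![1,0,1,0], ![1,0,0,1]}) = 1 := by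
    have h := hρ₁ 2 (Matrix.of ![![1,0,1,0], ![1,0,0,1]])
    rw [rowSpace_two] at h
    rw [h]
    have hP : (!![1, ω, 0, ω + 1; 0, 0, 1, ω] : Matrix (Fin 2) (Fin 4) (GaloisField 2 2)) *
        ((Matrix.of ![![1,0,1,0], ![1,0,0,1]]).map (algebraMap (ZMod 2) (GaloisField 2 2)))ᵀ
        = !![1, ω * 1; 1, ω * 1] := by
      ext i j
      fin_cases i <;> fin_cases j
      · simp [Matrix.mul_apply, Fin.sum_univ_four, Matrix.map_apply]
      · simp [Matrix.mul_apply, Fin.sum_univ_four, Matrix.map_apply]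
        linear_combination h2
      · simp [Matrix.mul_apply, Fin.sum_univ_four, Matrix.map_apply]
      · simp [Matrix.mul_apply, Fin.sum_univ_four, Matrix.map_apply]
    rw [hP]
    exact rank_pair_eq_one 1 1 ω (by simp)
  have RS4 : ρ₁ (span (ZMod 2) {![0,1,0,1], ![1,0,1,1]}) = 1 := by
    have h := hρ₁ 2 (Matrix.of ![![0,1,0,1], ![1,0,1,1]])
    rw [rowSpace_two] at h
    rw [h]
    have hP : (!![1, ω, 0, ω + 1; 0, 0, 1, ω] : Matrix (Fin 2) (Fin 4) (GaloisField 2 2)) *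
        ((Matrix.of ![![0,1,0,1], ![1,0,1,1]]).map (algebraMap (ZMod 2) (GaloisField 2 2)))ᵀ
        = !![1, ω * 1; ω, ω * ω] := by
      ext i j
      fin_cases i <;> fin_cases j
      · simp [Matrix.mul_apply, Fin.sum_univ_four, Matrix.map_apply]
        linear_combination ω * h2
      · simp [Matrix.mul_apply, Fin.sum_univ_four, Matrix.map_apply]
        linear_combination h2
      · simp [Matrix.mul_apply, Fin.sum_univ_four, Matrix.map_apply]
      · simp [Matrix.mul_apply, Fin.sum_univ_four, Matrix.map_apply]
        linear_combination -hω
    rw [hP]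
    exact rank_pair_eq_one 1 ω ω (by simp)
  have RS5 : ρ₁ (span (ZMod 2) {![1,0,0,0], ![1,1,0,0]}) = 1 := by
    have h := hρ₁ 2 (Matrix.of ![![1,0,0,0], ![1,1,0,0]])
    rw [rowSpace_two] at h
    rw [h]
    have hP : (!![1, ω, 0, ω + 1; 0, 0, 1, ω] : Matrix (Fin 2) (Fin 4) (GaloisField 2 2)) *
        ((Matrix.of ![![1,0,0,0], ![1,1,0,0]]).map (algebraMap (ZMod 2) (GaloisField 2 2)))ᵀ
        = !![1, (1 + ω) * 1; 0, (1 + ω) * 0] := by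
      ext i j
      fin_cases i <;> fin_cases j
      · simp [Matrix.mul_apply, Fin.sum_univ_four, Matrix.map_apply]
      · simp [Matrix.mul_apply, Fin.sum_univ_four, Matrix.map_apply]
      · simp [Matrix.mul_apply, Fin.sum_univ_four, Matrix.map_apply]
      · simp [Matrix.mul_apply, Fin.sum_univ_four, Matrix.map_apply]
    rw [hP]
    exact rank_pair_eq_one 1 0 (1 + ω) (by simp)
  have RT : ρ₁ (span (ZMod 2) {![1,0,0,0], ![0,0,1,0]}) = 2 := by
    have h := hρ₁ 2 (Matrix.of ![![1,0,0,0], ![0,0,1,0]])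
    rw [rowSpace_two] at h
    rw [h]
    have hP : (!![1, ω, 0, ω + 1; 0, 0, 1, ω] : Matrix (Fin 2) (Fin 4) (GaloisField 2 2)) *
        ((Matrix.of ![![1,0,0,0], ![0,0,1,0]]).map (algebraMap (ZMod 2) (GaloisField 2 2)))ᵀ
        = 1 := by
      rw [Matrix.one_fin_two]
      ext i j
      fin_cases i <;> fin_cases j <;>
        simp [Matrix.mul_apply, Fin.sum_univ_four, Matrix.map_apply]
    rw [hP, Matrix.rank_one]
    simp
  -- pair of zero functions spans ⊥
  have span00 : span (ZMod 2) {(0 : Fin 4 → ZMod 2), 0} = ⊥ := by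
    rw [Set.pair_eq_singleton, span_zero_singleton]
  -- dsRank of special subspaces embedded in the first component
  have dsC1 : ∀ v w : Fin 4 → ZMod 2, v ≠ 0 → w ≠ 0 → v ≠ w →
      ρ₁ (span (ZMod 2) {v, w}) = 1 →
      dsRank ρ₁ ρ₁ (span (ZMod 2)
        {(Sum.elim v 0 : Fin 4 ⊕ Fin 4 → ZMod 2), Sum.elim w 0}) = 1 := by
    intro v w hv hw hvw hρ
    have ha := elim_ne_zero₁ (0 : Fin 4 → ZMod 2) hv
    have hb := elim_ne_zero₁ (0 : Fin 4 → ZMod 2) hw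
    have hab := elim_ne v w (0:Fin 4 → ZMod 2) 0 hvw
    rw [dsPair ρ₁ ρ₁ _ _ ha hb hab (-1) (by norm_num) (by omega) (by omega) (by omega)
      (by rw [map_span_pair_inl, map_span_pair_inr, hρ, span00, R0]; norm_num)
      ⟨span (ZMod 2) {(Sum.elim v 0 : Fin 4 ⊕ Fin 4 → ZMod 2), Sum.elim w 0}, le_refl _, by
        rw [map_span_pair_inl, map_span_pair_inr, hρ, span00, R0,
          z2_finrank_pair ha hb hab]; norm_num⟩]
    norm_num
  have dsC2 : ∀ v w : Fin 4 → ZMod 2, v ≠ 0 → w ≠ 0 → v ≠ w →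
      ρ₁ (span (ZMod 2) {v, w}) = 1 →
      dsRank ρ₁ ρ₁ (span (ZMod 2)
        {(Sum.elim (0 : Fin 4 → ZMod 2) v : Fin 4 ⊕ Fin 4 → ZMod 2), Sum.elim (0 : Fin 4 → ZMod 2) w}) = 1 := by
    intro v w hv hw hvw hρ
    have ha := elim_ne_zero₂ (0 : Fin 4 → ZMod 2) hv
    have hb := elim_ne_zero₂ (0 : Fin 4 → ZMod 2) hw
    have hab := elim_ne' (0:Fin 4 → ZMod 2) 0 v w hvw
    rw [dsPair ρ₁ ρ₁ _ _ ha hb hab (-1) (by norm_num) (by omega) (by omega) (by omega)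
      (by rw [map_span_pair_inl, map_span_pair_inr, hρ, span00, R0]; norm_num)
      ⟨span (ZMod 2) {(Sum.elim (0 : Fin 4 → ZMod 2) v : Fin 4 ⊕ Fin 4 → ZMod 2), Sum.elim (0 : Fin 4 → ZMod 2) w}, le_refl _, by
        rw [map_span_pair_inl, map_span_pair_inr, hρ, span00, R0,
          z2_finrank_pair ha hb hab]; norm_num⟩]
    norm_num
  have dsC1' : ∀ v w : Fin 4 → ZMod 2, v ≠ 0 → w ≠ 0 → v ≠ w →
      ρ₁ (span (ZMod 2) {v, w}) = 2 →
      dsRank ρ₁ ρ₁ (span (ZMod 2)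
        {(Sum.elim v 0 : Fin 4 ⊕ Fin 4 → ZMod 2), Sum.elim w 0}) = 2 := by
    intro v w hv hw hvw hρ
    have ha := elim_ne_zero₁ (0 : Fin 4 → ZMod 2) hv
    have hb := elim_ne_zero₁ (0 : Fin 4 → ZMod 2) hw
    have hab := elim_ne v w (0:Fin 4 → ZMod 2) 0 hvw
    rw [dsPair ρ₁ ρ₁ _ _ ha hb hab 0 (by norm_num)
      (by rw [map_span_single_inl, map_span_single_inr, span_zero_singleton, R1 v hv, R0]; norm_num)
      (by rw [map_span_single_inl, map_span_single_inr, span_zero_singleton, R1 w hw, R0]; norm_num)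
      (by rw [show (Sum.elim v (0 : Fin 4 → ZMod 2) + Sum.elim w (0 : Fin 4 → ZMod 2)
            : Fin 4 ⊕ Fin 4 → ZMod 2) = Sum.elim (v + w) 0 from by rw [elim_add, add_zero],
          map_span_single_inl, map_span_single_inr, span_zero_singleton,
          R1 (v + w) (z2_add_ne hvw), R0]; norm_num)
      (by rw [map_span_pair_inl, map_span_pair_inr, hρ, span00, R0]; norm_num)
      ⟨⊥, bot_le, by simp only [Submodule.map_bot, finrank_bot, R0]; norm_num⟩]
    norm_num
  have dsC2' : ∀ v w : Fin 4 → ZMod 2, v ≠ 0 → w ≠ 0 → v ≠ w →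
      ρ₁ (span (ZMod 2) {v, w}) = 2 →
      dsRank ρ₁ ρ₁ (span (ZMod 2)
        {(Sum.elim (0 : Fin 4 → ZMod 2) v : Fin 4 ⊕ Fin 4 → ZMod 2), Sum.elim (0 : Fin 4 → ZMod 2) w}) = 2 := by
    intro v w hv hw hvw hρ
    have ha := elim_ne_zero₂ (0 : Fin 4 → ZMod 2) hv
    have hb := elim_ne_zero₂ (0 : Fin 4 → ZMod 2) hw
    have hab := elim_ne' (0:Fin 4 → ZMod 2) 0 v w hvw
    rw [dsPair ρ₁ ρ₁ _ _ ha hb hab 0 (by norm_num)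
      (by rw [map_span_single_inl, map_span_single_inr, span_zero_singleton, R1 v hv, R0]; norm_num)
      (by rw [map_span_single_inl, map_span_single_inr, span_zero_singleton, R1 w hw, R0]; norm_num)
      (by rw [show (Sum.elim (0 : Fin 4 → ZMod 2) v + Sum.elim (0 : Fin 4 → ZMod 2) w
            : Fin 4 ⊕ Fin 4 → ZMod 2) = Sum.elim (0 : Fin 4 → ZMod 2) (v + w) from by rw [elim_add, add_zero],
          map_span_single_inl, map_span_single_inr, span_zero_singleton,
          R1 (v + w) (z2_add_ne hvw), R0]; norm_num)
      (by rw [map_span_pair_inl, map_span_pair_inr, hρ, span00, R0]; norm_num)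
      ⟨⊥, bot_le, by simp only [Submodule.map_bot, finrank_bot, R0]; norm_num⟩]
    norm_num
  have dsMix : ∀ v w v' w' : Fin 4 → ZMod 2, v ≠ 0 → w ≠ 0 → v' ≠ 0 → w' ≠ 0 →
      v ≠ v' → w ≠ w' →
      ρ₁ (span (ZMod 2) {v, v'}) = 1 → ρ₁ (span (ZMod 2) {w, w'}) = 1 →
      dsRank ρ₁ ρ₁ (span (ZMod 2)
        {(Sum.elim v w : Fin 4 ⊕ Fin 4 → ZMod 2), Sum.elim v' w'}) = 2 := by
    intro v w v' w' hv hw hv' hw' hvv' hww' hρa hρb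
    have ha := elim_ne_zero₁ w hv
    have hb := elim_ne_zero₁ w' hv'
    have hab := elim_ne v v' w w' hvv'
    rw [dsPair ρ₁ ρ₁ _ _ ha hb hab 0 (by norm_num)
      (by rw [map_span_single_inl, map_span_single_inr, R1 v hv, R1 w hw]; norm_num)
      (by rw [map_span_single_inl, map_span_single_inr, R1 v' hv', R1 w' hw']; norm_num)
      (by rw [elim_add, map_span_single_inl, map_span_single_inr,
        R1 (v + v') (z2_add_ne hvv'), R1 (w + w') (z2_add_ne hww')]; norm_num)
      (by rw [map_span_pair_inl, map_span_pair_inr, hρa, hρb]; norm_num)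
      ⟨⊥, bot_le, by simp only [Submodule.map_bot, finrank_bot, R0]; norm_num⟩]
    norm_num
  -- ## the H side
  have hadd : ∀ a b : (Fin 4 ⊕ Fin 4) → ZMod 2,
      H.mulVec (fun c => algebraMap (ZMod 2) (GaloisField 2 m) ((a + b) c)) =
      H.mulVec (fun c => algebraMap (ZMod 2) (GaloisField 2 m) (a c)) +
      H.mulVec (fun c => algebraMap (ZMod 2) (GaloisField 2 m) (b c)) := by
    intro a b
    have hfun : (fun c => algebraMap (ZMod 2) (GaloisField 2 m) ((a + b) c)) =
        (fun c => algebraMap (ZMod 2) (GaloisField 2 m) (a c)) +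
        (fun c => algebraMap (ZMod 2) (GaloisField 2 m) (b c)) := by
      funext c
      simp [map_add]
    rw [hfun, Matrix.mulVec_add]
  have hΦ : ∀ (a b : (Fin 4 ⊕ Fin 4) → ZMod 2) (t : ℤ),
      dsRank ρ₁ ρ₁ (span (ZMod 2) {a, b}) = t →
      (finrank (GaloisField 2 m) (span (GaloisField 2 m)
        ({H.mulVec (fun c => algebraMap (ZMod 2) (GaloisField 2 m) (a c)),
          H.mulVec (fun c => algebraMap (ZMod 2) (GaloisField 2 m) (b c))} :
            Set (Fin r → GaloisField 2 m))) : ℤ) = t := by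
    intro a b t hds
    have h := hH 2 (Matrix.of ![a, b])
    rw [rowSpace_two, hds] at h
    rw [← h]
    congr 1
    rw [Matrix.rank_eq_finrank_span_cols, rangeFin2]
    have hc0 : (H * ((Matrix.of ![a, b]).map (algebraMap (ZMod 2) (GaloisField 2 m)))ᵀ)ᵀ 0 =
        H.mulVec (fun c => algebraMap (ZMod 2) (GaloisField 2 m) (a c)) := by
      funext i
      simp [Matrix.mul_apply, Matrix.mulVec, dotProduct, Matrix.map_apply]
    have hc1 : (H * ((Matrix.of ![a, b]).map (algebraMap (ZMod 2) (GaloisField 2 m)))ᵀ)ᵀ 1 =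
        H.mulVec (fun c => algebraMap (ZMod 2) (GaloisField 2 m) (b c)) := by
      funext i
      simp [Matrix.mul_apply, Matrix.mulVec, dotProduct, Matrix.map_apply]
    rw [show (H * ((Matrix.of ![a, b]).map (algebraMap (ZMod 2) (GaloisField 2 m)))ᵀ).col 0 =
        H.mulVec (fun c => algebraMap (ZMod 2) (GaloisField 2 m) (a c)) from hc0,
      show (H * ((Matrix.of ![a, b]).map (algebraMap (ZMod 2) (GaloisField 2 m)))ᵀ).col 1 =
        H.mulVec (fun c => algebraMap (ZMod 2) (GaloisField 2 m) (b c)) from hc1]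
  -- instantiate for the eleven relevant subspaces (ℕ-valued versions)
  have ET : finrank (GaloisField 2 m) (span (GaloisField 2 m)
      ({H.mulVec (fun c => algebraMap (ZMod 2) (GaloisField 2 m)
          ((Sum.elim ![1,0,0,0] (0 : Fin 4 → ZMod 2) : Fin 4 ⊕ Fin 4 → ZMod 2) c)),
        H.mulVec (fun c => algebraMap (ZMod 2) (GaloisField 2 m)
          ((Sum.elim ![0,0,1,0] (0 : Fin 4 → ZMod 2) : Fin 4 ⊕ Fin 4 → ZMod 2) c))} :
          Set (Fin r → GaloisField 2 m))) = 2 := by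
    exact_mod_cast hΦ _ _ 2 (dsC1' ![1,0,0,0] ![0,0,1,0] (by decide) (by decide) (by decide) RT)
  have ES1 : finrank (GaloisField 2 m) (span (GaloisField 2 m)
      ({H.mulVec (fun c => algebraMap (ZMod 2) (GaloisField 2 m) ((Sum.elim ![1,0,0,0] (0 : Fin 4 → ZMod 2) : Fin 4 ⊕ Fin 4 → ZMod 2) c)),
        H.mulVec (fun c => algebraMap (ZMod 2) (GaloisField 2 m) ((Sum.elim ![0,1,0,0] (0 : Fin 4 → ZMod 2) : Fin 4 ⊕ Fin 4 → ZMod 2) c))} :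
          Set (Fin r → GaloisField 2 m))) = 1 := by
    exact_mod_cast hΦ _ _ 1 (dsC1 ![1,0,0,0] ![0,1,0,0] (by decide) (by decide) (by decide) RS1)
  have ES2 : finrank (GaloisField 2 m) (span (GaloisField 2 m)
      ({H.mulVec (fun c => algebraMap (ZMod 2) (GaloisField 2 m) ((Sum.elim ![0,0,1,0] (0 : Fin 4 → ZMod 2) : Fin 4 ⊕ Fin 4 → ZMod 2) c)),
        H.mulVec (fun c => algebraMap (ZMod 2) (GaloisField 2 m) ((Sum.elim ![1,1,0,1] (0 : Fin 4 → ZMod 2) : Fin 4 ⊕ Fin 4 → ZMod 2) c))} :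
          Set (Fin r → GaloisField 2 m))) = 1 := by
    exact_mod_cast hΦ _ _ 1 (dsC1 ![0,0,1,0] ![1,1,0,1] (by decide) (by decide) (by decide) RS2)
  have ES3 : finrank (GaloisField 2 m) (span (GaloisField 2 m)
      ({H.mulVec (fun c => algebraMap (ZMod 2) (GaloisField 2 m) ((Sum.elim ![1,0,1,0] (0 : Fin 4 → ZMod 2) : Fin 4 ⊕ Fin 4 → ZMod 2) c)),
        H.mulVec (fun c => algebraMap (ZMod 2) (GaloisField 2 m) ((Sum.elim ![1,0,0,1] (0 : Fin 4 → ZMod 2) : Fin 4 ⊕ Fin 4 → ZMod 2) c))} :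
          Set (Fin r → GaloisField 2 m))) = 1 := by
    exact_mod_cast hΦ _ _ 1 (dsC1 ![1,0,1,0] ![1,0,0,1] (by decide) (by decide) (by decide) RS3)
  have ES4 : finrank (GaloisField 2 m) (span (GaloisField 2 m)
      ({H.mulVec (fun c => algebraMap (ZMod 2) (GaloisField 2 m) ((Sum.elim ![0,1,0,1] (0 : Fin 4 → ZMod 2) : Fin 4 ⊕ Fin 4 → ZMod 2) c)),
        H.mulVec (fun c => algebraMap (ZMod 2) (GaloisField 2 m) ((Sum.elim ![1,0,1,1] (0 : Fin 4 → ZMod 2) : Fin 4 ⊕ Fin 4 → ZMod 2) c))} :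
          Set (Fin r → GaloisField 2 m))) = 1 := by
    exact_mod_cast hΦ _ _ 1 (dsC1 ![0,1,0,1] ![1,0,1,1] (by decide) (by decide) (by decide) RS4)
  have FT : finrank (GaloisField 2 m) (span (GaloisField 2 m)
      ({H.mulVec (fun c => algebraMap (ZMod 2) (GaloisField 2 m) ((Sum.elim (0 : Fin 4 → ZMod 2) ![1,0,0,0] : Fin 4 ⊕ Fin 4 → ZMod 2) c)),
        H.mulVec (fun c => algebraMap (ZMod 2) (GaloisField 2 m) ((Sum.elim (0 : Fin 4 → ZMod 2) ![0,0,1,0] : Fin 4 ⊕ Fin 4 → ZMod 2) c))} :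
          Set (Fin r → GaloisField 2 m))) = 2 := by
    exact_mod_cast hΦ _ _ 2 (dsC2' ![1,0,0,0] ![0,0,1,0] (by decide) (by decide) (by decide) RT)
  have FS1 : finrank (GaloisField 2 m) (span (GaloisField 2 m)
      ({H.mulVec (fun c => algebraMap (ZMod 2) (GaloisField 2 m) ((Sum.elim (0 : Fin 4 → ZMod 2) ![1,0,0,0] : Fin 4 ⊕ Fin 4 → ZMod 2) c)),
        H.mulVec (fun c => algebraMap (ZMod 2) (GaloisField 2 m) ((Sum.elim (0 : Fin 4 → ZMod 2) ![0,1,0,0] : Fin 4 ⊕ Fin 4 → ZMod 2) c))} :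
          Set (Fin r → GaloisField 2 m))) = 1 := by
    exact_mod_cast hΦ _ _ 1 (dsC2 ![1,0,0,0] ![0,1,0,0] (by decide) (by decide) (by decide) RS1)
  have FS2 : finrank (GaloisField 2 m) (span (GaloisField 2 m)
      ({H.mulVec (fun c => algebraMap (ZMod 2) (GaloisField 2 m) ((Sum.elim (0 : Fin 4 → ZMod 2) ![0,0,1,0] : Fin 4 ⊕ Fin 4 → ZMod 2) c)),
        H.mulVec (fun c => algebraMap (ZMod 2) (GaloisField 2 m) ((Sum.elim (0 : Fin 4 → ZMod 2) ![1,1,0,1] : Fin 4 ⊕ Fin 4 → ZMod 2) c))} :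
          Set (Fin r → GaloisField 2 m))) = 1 := by
    exact_mod_cast hΦ _ _ 1 (dsC2 ![0,0,1,0] ![1,1,0,1] (by decide) (by decide) (by decide) RS2)
  have FS3 : finrank (GaloisField 2 m) (span (GaloisField 2 m)
      ({H.mulVec (fun c => algebraMap (ZMod 2) (GaloisField 2 m) ((Sum.elim (0 : Fin 4 → ZMod 2) ![1,0,1,0] : Fin 4 ⊕ Fin 4 → ZMod 2) c)),
        H.mulVec (fun c => algebraMap (ZMod 2) (GaloisField 2 m) ((Sum.elim (0 : Fin 4 → ZMod 2) ![1,0,0,1] : Fin 4 ⊕ Fin 4 → ZMod 2) c))} :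
          Set (Fin r → GaloisField 2 m))) = 1 := by
    exact_mod_cast hΦ _ _ 1 (dsC2 ![1,0,1,0] ![1,0,0,1] (by decide) (by decide) (by decide) RS3)
  have FS4 : finrank (GaloisField 2 m) (span (GaloisField 2 m)
      ({H.mulVec (fun c => algebraMap (ZMod 2) (GaloisField 2 m) ((Sum.elim (0 : Fin 4 → ZMod 2) ![0,1,0,1] : Fin 4 ⊕ Fin 4 → ZMod 2) c)),
        H.mulVec (fun c => algebraMap (ZMod 2) (GaloisField 2 m) ((Sum.elim (0 : Fin 4 → ZMod 2) ![1,0,1,1] : Fin 4 ⊕ Fin 4 → ZMod 2) c))} :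
          Set (Fin r → GaloisField 2 m))) = 1 := by
    exact_mod_cast hΦ _ _ 1 (dsC2 ![0,1,0,1] ![1,0,1,1] (by decide) (by decide) (by decide) RS4)
  have EM1 : finrank (GaloisField 2 m) (span (GaloisField 2 m)
      ({H.mulVec (fun c => algebraMap (ZMod 2) (GaloisField 2 m) ((Sum.elim ![1,0,0,0] ![1,0,0,0] : Fin 4 ⊕ Fin 4 → ZMod 2) c)),
        H.mulVec (fun c => algebraMap (ZMod 2) (GaloisField 2 m) ((Sum.elim ![0,1,0,0] ![0,1,0,0] : Fin 4 ⊕ Fin 4 → ZMod 2) c))} :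
          Set (Fin r → GaloisField 2 m))) = 2 := by
    exact_mod_cast hΦ _ _ 2 (dsMix ![1,0,0,0] ![1,0,0,0] ![0,1,0,0] ![0,1,0,0] (by decide) (by decide) (by decide) (by decide) (by decide) (by decide) RS1 RS1)
  have EM2 : finrank (GaloisField 2 m) (span (GaloisField 2 m)
      ({H.mulVec (fun c => algebraMap (ZMod 2) (GaloisField 2 m) ((Sum.elim ![1,0,0,0] ![1,0,0,0] : Fin 4 ⊕ Fin 4 → ZMod 2) c)),
        H.mulVec (fun c => algebraMap (ZMod 2) (GaloisField 2 m) ((Sum.elim ![0,1,0,0] ![1,1,0,0] : Fin 4 ⊕ Fin 4 → ZMod 2) c))} :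
          Set (Fin r → GaloisField 2 m))) = 2 := by
    exact_mod_cast hΦ _ _ 2 (dsMix ![1,0,0,0] ![1,0,0,0] ![0,1,0,0] ![1,1,0,0] (by decide) (by decide) (by decide) (by decide) (by decide) (by decide) RS1 RS5)
  have dES3a : (Sum.elim ![1,0,1,0] (0 : Fin 4 → ZMod 2) : Fin 4 ⊕ Fin 4 → ZMod 2) = (Sum.elim ![1,0,0,0] (0 : Fin 4 → ZMod 2) : Fin 4 ⊕ Fin 4 → ZMod 2) + (Sum.elim ![0,0,1,0] (0 : Fin 4 → ZMod 2) : Fin 4 ⊕ Fin 4 → ZMod 2) := by decide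
  have dES3b : (Sum.elim ![1,0,0,1] (0 : Fin 4 → ZMod 2) : Fin 4 ⊕ Fin 4 → ZMod 2) = (Sum.elim ![0,1,0,0] (0 : Fin 4 → ZMod 2) : Fin 4 ⊕ Fin 4 → ZMod 2) + (Sum.elim ![1,1,0,1] (0 : Fin 4 → ZMod 2) : Fin 4 ⊕ Fin 4 → ZMod 2) := by decide
  have dES4a : (Sum.elim ![0,1,0,1] (0 : Fin 4 → ZMod 2) : Fin 4 ⊕ Fin 4 → ZMod 2) = (Sum.elim ![1,0,0,0] (0 : Fin 4 → ZMod 2) : Fin 4 ⊕ Fin 4 → ZMod 2) + (Sum.elim ![1,1,0,1] (0 : Fin 4 → ZMod 2) : Fin 4 ⊕ Fin 4 → ZMod 2) := by decide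
  have dES4b : (Sum.elim ![1,0,1,1] (0 : Fin 4 → ZMod 2) : Fin 4 ⊕ Fin 4 → ZMod 2) = (Sum.elim ![0,1,0,0] (0 : Fin 4 → ZMod 2) : Fin 4 ⊕ Fin 4 → ZMod 2) + (Sum.elim ![0,0,1,0] (0 : Fin 4 → ZMod 2) : Fin 4 ⊕ Fin 4 → ZMod 2) + (Sum.elim ![1,1,0,1] (0 : Fin 4 → ZMod 2) : Fin 4 ⊕ Fin 4 → ZMod 2) := by decide
  have dFS3a : (Sum.elim (0 : Fin 4 → ZMod 2) ![1,0,1,0] : Fin 4 ⊕ Fin 4 → ZMod 2) = (Sum.elim (0 : Fin 4 → ZMod 2) ![1,0,0,0] : Fin 4 ⊕ Fin 4 → ZMod 2) + (Sum.elim (0 : Fin 4 → ZMod 2) ![0,0,1,0] : Fin 4 ⊕ Fin 4 → ZMod 2) := by decide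
  have dFS3b : (Sum.elim (0 : Fin 4 → ZMod 2) ![1,0,0,1] : Fin 4 ⊕ Fin 4 → ZMod 2) = (Sum.elim (0 : Fin 4 → ZMod 2) ![0,1,0,0] : Fin 4 ⊕ Fin 4 → ZMod 2) + (Sum.elim (0 : Fin 4 → ZMod 2) ![1,1,0,1] : Fin 4 ⊕ Fin 4 → ZMod 2) := by decide
  have dFS4a : (Sum.elim (0 : Fin 4 → ZMod 2) ![0,1,0,1] : Fin 4 ⊕ Fin 4 → ZMod 2) = (Sum.elim (0 : Fin 4 → ZMod 2) ![1,0,0,0] : Fin 4 ⊕ Fin 4 → ZMod 2) + (Sum.elim (0 : Fin 4 → ZMod 2) ![1,1,0,1] : Fin 4 ⊕ Fin 4 → ZMod 2) := by decide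
  have dFS4b : (Sum.elim (0 : Fin 4 → ZMod 2) ![1,0,1,1] : Fin 4 ⊕ Fin 4 → ZMod 2) = (Sum.elim (0 : Fin 4 → ZMod 2) ![0,1,0,0] : Fin 4 ⊕ Fin 4 → ZMod 2) + (Sum.elim (0 : Fin 4 → ZMod 2) ![0,0,1,0] : Fin 4 ⊕ Fin 4 → ZMod 2) + (Sum.elim (0 : Fin 4 → ZMod 2) ![1,1,0,1] : Fin 4 ⊕ Fin 4 → ZMod 2) := by decide
  have dM1a : (Sum.elim ![1,0,0,0] ![1,0,0,0] : Fin 4 ⊕ Fin 4 → ZMod 2) = (Sum.elim ![1,0,0,0] (0 : Fin 4 → ZMod 2) : Fin 4 ⊕ Fin 4 → ZMod 2) + (Sum.elim (0 : Fin 4 → ZMod 2) ![1,0,0,0] : Fin 4 ⊕ Fin 4 → ZMod 2) := by decide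
  have dM1b : (Sum.elim ![0,1,0,0] ![0,1,0,0] : Fin 4 ⊕ Fin 4 → ZMod 2) = (Sum.elim ![0,1,0,0] (0 : Fin 4 → ZMod 2) : Fin 4 ⊕ Fin 4 → ZMod 2) + (Sum.elim (0 : Fin 4 → ZMod 2) ![0,1,0,0] : Fin 4 ⊕ Fin 4 → ZMod 2) := by decide
  have dM2b : (Sum.elim ![0,1,0,0] ![1,1,0,0] : Fin 4 ⊕ Fin 4 → ZMod 2) = (Sum.elim ![0,1,0,0] (0 : Fin 4 → ZMod 2) : Fin 4 ⊕ Fin 4 → ZMod 2) + ((Sum.elim (0 : Fin 4 → ZMod 2) ![1,0,0,0] : Fin 4 ⊕ Fin 4 → ZMod 2) + (Sum.elim (0 : Fin 4 → ZMod 2) ![0,1,0,0] : Fin 4 ⊕ Fin 4 → ZMod 2)) := by decide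
  rw [dES3a, dES3b] at ES3
  rw [dES4a, dES4b] at ES4
  rw [dFS3a, dFS3b] at FS3
  rw [dFS4a, dFS4b] at FS4
  rw [dM1a, dM1b] at EM1
  rw [dM1a, dM2b] at EM2
  rw [hadd (Sum.elim ![1,0,0,0] (0 : Fin 4 → ZMod 2) : Fin 4 ⊕ Fin 4 → ZMod 2) (Sum.elim ![0,0,1,0] (0 : Fin 4 → ZMod 2) : Fin 4 ⊕ Fin 4 → ZMod 2), hadd (Sum.elim ![0,1,0,0] (0 : Fin 4 → ZMod 2) : Fin 4 ⊕ Fin 4 → ZMod 2) (Sum.elim ![1,1,0,1] (0 : Fin 4 → ZMod 2) : Fin 4 ⊕ Fin 4 → ZMod 2)] at ES3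
  rw [hadd ((Sum.elim ![0,1,0,0] (0 : Fin 4 → ZMod 2) : Fin 4 ⊕ Fin 4 → ZMod 2) + (Sum.elim ![0,0,1,0] (0 : Fin 4 → ZMod 2) : Fin 4 ⊕ Fin 4 → ZMod 2)) (Sum.elim ![1,1,0,1] (0 : Fin 4 → ZMod 2) : Fin 4 ⊕ Fin 4 → ZMod 2), hadd (Sum.elim ![0,1,0,0] (0 : Fin 4 → ZMod 2) : Fin 4 ⊕ Fin 4 → ZMod 2) (Sum.elim ![0,0,1,0] (0 : Fin 4 → ZMod 2) : Fin 4 ⊕ Fin 4 → ZMod 2),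
    hadd (Sum.elim ![1,0,0,0] (0 : Fin 4 → ZMod 2) : Fin 4 ⊕ Fin 4 → ZMod 2) (Sum.elim ![1,1,0,1] (0 : Fin 4 → ZMod 2) : Fin 4 ⊕ Fin 4 → ZMod 2)] at ES4
  rw [hadd (Sum.elim (0 : Fin 4 → ZMod 2) ![1,0,0,0] : Fin 4 ⊕ Fin 4 → ZMod 2) (Sum.elim (0 : Fin 4 → ZMod 2) ![0,0,1,0] : Fin 4 ⊕ Fin 4 → ZMod 2), hadd (Sum.elim (0 : Fin 4 → ZMod 2) ![0,1,0,0] : Fin 4 ⊕ Fin 4 → ZMod 2) (Sum.elim (0 : Fin 4 → ZMod 2) ![1,1,0,1] : Fin 4 ⊕ Fin 4 → ZMod 2)] at FS3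
  rw [hadd ((Sum.elim (0 : Fin 4 → ZMod 2) ![0,1,0,0] : Fin 4 ⊕ Fin 4 → ZMod 2) + (Sum.elim (0 : Fin 4 → ZMod 2) ![0,0,1,0] : Fin 4 ⊕ Fin 4 → ZMod 2)) (Sum.elim (0 : Fin 4 → ZMod 2) ![1,1,0,1] : Fin 4 ⊕ Fin 4 → ZMod 2), hadd (Sum.elim (0 : Fin 4 → ZMod 2) ![0,1,0,0] : Fin 4 ⊕ Fin 4 → ZMod 2) (Sum.elim (0 : Fin 4 → ZMod 2) ![0,0,1,0] : Fin 4 ⊕ Fin 4 → ZMod 2),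
    hadd (Sum.elim (0 : Fin 4 → ZMod 2) ![1,0,0,0] : Fin 4 ⊕ Fin 4 → ZMod 2) (Sum.elim (0 : Fin 4 → ZMod 2) ![1,1,0,1] : Fin 4 ⊕ Fin 4 → ZMod 2)] at FS4
  rw [hadd (Sum.elim ![1,0,0,0] (0 : Fin 4 → ZMod 2) : Fin 4 ⊕ Fin 4 → ZMod 2) (Sum.elim (0 : Fin 4 → ZMod 2) ![1,0,0,0] : Fin 4 ⊕ Fin 4 → ZMod 2), hadd (Sum.elim ![0,1,0,0] (0 : Fin 4 → ZMod 2) : Fin 4 ⊕ Fin 4 → ZMod 2) (Sum.elim (0 : Fin 4 → ZMod 2) ![0,1,0,0] : Fin 4 ⊕ Fin 4 → ZMod 2)] at EM1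
  rw [hadd (Sum.elim ![1,0,0,0] (0 : Fin 4 → ZMod 2) : Fin 4 ⊕ Fin 4 → ZMod 2) (Sum.elim (0 : Fin 4 → ZMod 2) ![1,0,0,0] : Fin 4 ⊕ Fin 4 → ZMod 2), hadd (Sum.elim ![0,1,0,0] (0 : Fin 4 → ZMod 2) : Fin 4 ⊕ Fin 4 → ZMod 2) ((Sum.elim (0 : Fin 4 → ZMod 2) ![1,0,0,0] : Fin 4 ⊕ Fin 4 → ZMod 2) + (Sum.elim (0 : Fin 4 → ZMod 2) ![0,1,0,0] : Fin 4 ⊕ Fin 4 → ZMod 2)),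
    hadd (Sum.elim (0 : Fin 4 → ZMod 2) ![1,0,0,0] : Fin 4 ⊕ Fin 4 → ZMod 2) (Sum.elim (0 : Fin 4 → ZMod 2) ![0,1,0,0] : Fin 4 ⊕ Fin 4 → ZMod 2)] at EM2
  have h2K : (1 : GaloisField 2 m) + 1 = 0 := by
    have hz : ((1 : ZMod 2) + 1) = 0 := by decide
    have hc := congrArg (algebraMap (ZMod 2) (GaloisField 2 m)) hz
    simpa using hc
  exact final_contradiction h2K
    (H.mulVec (fun c => algebraMap (ZMod 2) (GaloisField 2 m) ((Sum.elim ![1,0,0,0] (0 : Fin 4 → ZMod 2) : Fin 4 ⊕ Fin 4 → ZMod 2) c))) (H.mulVec (fun c => algebraMap (ZMod 2) (GaloisField 2 m) ((Sum.elim ![0,1,0,0] (0 : Fin 4 → ZMod 2) : Fin 4 ⊕ Fin 4 → ZMod 2) c))) (H.mulVec (fun c => algebraMap (ZMod 2) (GaloisField 2 m) ((Sum.elim ![0,0,1,0] (0 : Fin 4 → ZMod 2) : Fin 4 ⊕ Fin 4 → ZMod 2) c))) (H.mulVec (fun c => algebraMap (ZMod 2) (GaloisField 2 m) ((Sum.elim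 ![1,1,0,1] (0 : Fin 4 → ZMod 2) : Fin 4 ⊕ Fin 4 → ZMod 2) c)))
    (H.mulVec (fun c => algebraMap (ZMod 2) (GaloisField 2 m) ((Sum.elim (0 : Fin 4 → ZMod 2) ![1,0,0,0] : Fin 4 ⊕ Fin 4 → ZMod 2) c))) (H.mulVec (fun c => algebraMap (ZMod 2) (GaloisField 2 m) ((Sum.elim (0 : Fin 4 → ZMod 2) ![0,1,0,0] : Fin 4 ⊕ Fin 4 → ZMod 2) c))) (H.mulVec (fun c => algebraMap (ZMod 2) (GaloisField 2 m) ((Sum.elim (0 : Fin 4 → ZMod 2) ![0,0,1,0] : Fin 4 ⊕ Fin 4 → ZMod 2) c))) (H.mulVec (fun c => algebraMap (ZMod 2) (GaloisField 2 m) ((Sum.elim (0 : Fin 4 → ZMod 2) ![1,1,0,1] : Fin 4 ⊕ Fin 4 → ZMod 2) c)))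
    ET ES1 ES2 ES3 ES4 FT FS1 FS2 FS3 FS4 EM1 EM2
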